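/- For q ≠ 0, 1, if H : ℝⁿ × ℝⁿ → ℝ is C² and X^q_H is conformally symplectic with constant c ≠ 0 — meaning (DX^q_H)ᵀΩ + Ω DX^q_H = cΩ at every point — then the Hessian block ∂²H/∂yᵢ∂xⱼ equals (c/(q⁻¹−1)) δᵢⱼ (a constant multiple of the identity) at every point. Conversely, if ∂²H/∂yᵢ∂xⱼ = λδᵢⱼ identically for a nonzero constant λ, then X^q_H is conformally symplectic with constant c = (q⁻¹−1)λ. -/

import Mathlib

noncomputable def pdx {n : ℕ} (H : (Fin n → ℝ) × (Fin n → ℝ) → ℝ)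
    (p : (Fin n → ℝ) × (Fin n → ℝ)) (i : Fin n) : ℝ :=
  fderiv ℝ H p (Pi.single i 1, 0)

noncomputable def pdy {n : ℕ} (H : (Fin n → ℝ) × (Fin n → ℝ) → ℝ)
    (p : (Fin n → ℝ) × (Fin n → ℝ)) (i : Fin n) : ℝ :=
  fderiv ℝ H p (0, Pi.single i 1)

/-- Standard symplectic form on `ℝⁿ × ℝⁿ`. -/
def sympl {n : ℕ} (Z₁ Z₂ : (Fin n → ℝ) × (Fin n → ℝ)) : ℝ :=
  ∑ i, (Z₁.2 i * Z₂.1 i - Z₁.1 i * Z₂.2 i)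

/-- The deformed Hamiltonian vector field `X^q_H`. -/
noncomputable def Xq {n : ℕ} (q : ℝ) (H : (Fin n → ℝ) × (Fin n → ℝ) → ℝ)
    (p : (Fin n → ℝ) × (Fin n → ℝ)) : (Fin n → ℝ) × (Fin n → ℝ) :=
  (fun i => q⁻¹ * pdy H p i, fun i => -(pdx H p i))

/-- Mixed second partial `∂²H/∂yᵢ∂xⱼ` (first in `xⱼ`, then in `yᵢ`). -/
noncomputable def pdyx {n : ℕ} (H : (Fin n → ℝ) × (Fin n → ℝ) → ℝ)
    (p : (Fin n → ℝ) × (Fin n → ℝ)) (i j : Fin n) : ℝ :=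
  fderiv ℝ (fun p' => pdx H p' j) p (0, Pi.single i 1)

/-!
The linearisation of `X^q_H` at `z` is `Y ↦ (q⁻¹ B(Y, ∂_y), -B(Y, ∂_x))`, where `B` is the Hessian
of `H` at `z`, symmetric by Schwarz. Writing `Yₖ = (aₖ, bₖ)`, the `xx`- and `yy`-blocks of `B`
cancel in `ω(DX Y₁, Y₂) + ω(Y₁, DX Y₂)`, which leaves `(q⁻¹ - 1) (M(b₁, a₂) - M(b₂, a₁))` for the
mixed block `M(u, v) = B((0, u), (v, 0))`. Testing on basis vectors reads off `M`; conversely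
`M = λ ⟨·,·⟩` turns this into `(q⁻¹ - 1) λ ω(Y₁, Y₂)`.
-/

theorem LinearMap.sum_mul_apply_single {ι R : Type*} [Fintype ι] [DecidableEq ι] [CommSemiring R]
    (f : (ι → R) →ₗ[R] R) (v : ι → R) : ∑ i, v i * f (Pi.single i 1) = f v := by
  conv_rhs => rw [← Finset.univ_sum_single v]
  simp only [map_sum]
  refine Finset.sum_congr rfl fun i _ => ?_
  rw [← smul_eq_mul, ← map_smul, ← Pi.single_smul', smul_eq_mul, mul_one]

theorem hasFDerivAt_fderiv_apply {𝕜 E F : Type*} [NontriviallyNormedField 𝕜]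
    [NormedAddCommGroup E] [NormedSpace 𝕜 E] [NormedAddCommGroup F] [NormedSpace 𝕜 F]
    {f : E → F} {p : E} (hf : DifferentiableAt 𝕜 (fderiv 𝕜 f) p) (v : E) :
    HasFDerivAt (fun p' => fderiv 𝕜 f p' v) ((fderiv 𝕜 (fderiv 𝕜 f) p).flip v) p :=
  (ContinuousLinearMap.apply 𝕜 F v).hasFDerivAt.comp p hf.hasFDerivAt

section

variable {n : ℕ}

local notation "V" => (Fin n → ℝ) × (Fin n → ℝ)

lemma sum_mul_apply_single_inl (T : V →L[ℝ] ℝ) (v : Fin n → ℝ) :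
    ∑ i, v i * T (Pi.single i 1, 0) = T (v, 0) :=
  LinearMap.sum_mul_apply_single (T.comp (.inl ℝ _ _) : (Fin n → ℝ) →ₗ[ℝ] ℝ) v

lemma sum_mul_apply_single_inr (T : V →L[ℝ] ℝ) (v : Fin n → ℝ) :
    ∑ i, v i * T (0, Pi.single i 1) = T (0, v) :=
  LinearMap.sum_mul_apply_single (T.comp (.inr ℝ _ _) : (Fin n → ℝ) →ₗ[ℝ] ℝ) v

lemma sympl_comm (Z₁ Z₂ : V) : sympl Z₁ Z₂ = -sympl Z₂ Z₁ := by
  simp only [sympl, ← Finset.sum_neg_distrib]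
  exact Finset.sum_congr rfl fun i _ => by ring

lemma sympl_single_fst_snd (i j : Fin n) :
    sympl (Pi.single j 1, 0) (0, Pi.single i 1) = -if i = j then 1 else 0 := by
  simp [sympl, Pi.single_apply, eq_comm]

/-- `DX^q_H` at a point where the Hessian of `H` is `B`. -/
noncomputable def linearizedXq (q : ℝ) (B : V →L[ℝ] V →L[ℝ] ℝ) (Y : V) : V :=
  (fun i => q⁻¹ * B Y (0, Pi.single i 1), fun i => -B Y (Pi.single i 1, 0))

lemma sympl_linearizedXq (q : ℝ) (B : V →L[ℝ] V →L[ℝ] ℝ) (Y₁ Y₂ : V) :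
    sympl (linearizedXq q B Y₁) Y₂ = -B Y₁ (Y₂.1, 0) - q⁻¹ * B Y₁ (0, Y₂.2) := by
  rw [← sum_mul_apply_single_inl (B Y₁), ← sum_mul_apply_single_inr (B Y₁)]
  simp only [sympl, linearizedXq, Finset.mul_sum, ← Finset.sum_neg_distrib,
    ← Finset.sum_sub_distrib]
  exact Finset.sum_congr rfl fun i _ => by ring

lemma sympl_linearizedXq_add (q : ℝ) {B : V →L[ℝ] V →L[ℝ] ℝ} (hB : ∀ u v, B u v = B v u)
    (Y₁ Y₂ : V) :
    sympl (linearizedXq q B Y₁) Y₂ + sympl Y₁ (linearizedXq q B Y₂) =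
      (q⁻¹ - 1) * (B (0, Y₁.2) (Y₂.1, 0) - B (0, Y₂.2) (Y₁.1, 0)) := by
  obtain ⟨a₁, b₁⟩ := Y₁
  obtain ⟨a₂, b₂⟩ := Y₂
  have split (a b : Fin n → ℝ) : ((a, b) : V) = (a, 0) + (0, b) := by simp
  rw [sympl_comm (a₁, b₁), sympl_linearizedXq, sympl_linearizedXq, split a₁ b₁, split a₂ b₂]
  simp only [map_add, add_apply, Prod.fst_add, Prod.snd_add, add_zero, zero_add]
  linear_combination -hB (a₁, 0) (a₂, 0) - q⁻¹ * hB (0, b₁) (0, b₂) +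
    q⁻¹ * hB (a₂, 0) (0, b₁) - q⁻¹ * hB (a₁, 0) (0, b₂)

lemma mixed_eq_of_conformal {q c : ℝ} (hq : q ≠ 1) {B : V →L[ℝ] V →L[ℝ] ℝ}
    (hB : ∀ u v, B u v = B v u)
    (hconf : ∀ Y₁ Y₂, sympl (linearizedXq q B Y₁) Y₂ + sympl Y₁ (linearizedXq q B Y₂) =
      c * sympl Y₁ Y₂) (i j : Fin n) :
    B (0, Pi.single i 1) (Pi.single j 1, 0) = if i = j then c / (q⁻¹ - 1) else 0 := by
  have hq' : q⁻¹ - 1 ≠ 0 := sub_ne_zero.2 (inv_eq_one.not.2 hq)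
  have h := hconf (Pi.single j 1, 0) (0, Pi.single i 1)
  rw [sympl_linearizedXq_add q hB, sympl_single_fst_snd] at h
  simp only [Prod.mk_zero_zero, map_zero, zero_sub] at h
  split_ifs at h ⊢
  · rw [eq_div_iff hq']
    linarith
  · simpa [hq'] using h

lemma conformal_of_mixed_eq {q l : ℝ} {B : V →L[ℝ] V →L[ℝ] ℝ} (hB : ∀ u v, B u v = B v u)
    (hmixed : ∀ i j, B (0, Pi.single i 1) (Pi.single j 1, 0) = if i = j then l else 0)
    (Y₁ Y₂ : V) :
    sympl (linearizedXq q B Y₁) Y₂ + sympl Y₁ (linearizedXq q B Y₂) =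
      (q⁻¹ - 1) * l * sympl Y₁ Y₂ := by
  have hcol (u : Fin n → ℝ) (j : Fin n) : B (0, u) (Pi.single j 1, 0) = l * u j := by
    simpa [hmixed, mul_comm] using (sum_mul_apply_single_inr (B.flip (Pi.single j 1, 0)) u).symm
  have hM (u v : Fin n → ℝ) : B (0, u) (v, 0) = l * ∑ i, v i * u i := by
    simp only [← sum_mul_apply_single_inl, hcol, Finset.mul_sum]
    exact Finset.sum_congr rfl fun i _ => by ring
  rw [sympl_linearizedXq_add q hB, hM, hM, sympl, Finset.sum_sub_distrib]
  simp only [mul_comm (Y₁.1 _), mul_comm (Y₁.2 _)]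
  ring

lemma pdyx_eq_fderiv_fderiv {H : V → ℝ} {p : V} (hH : DifferentiableAt ℝ (fderiv ℝ H) p)
    (i j : Fin n) :
    pdyx H p i j = fderiv ℝ (fderiv ℝ H) p (0, Pi.single i 1) (Pi.single j 1, 0) := by
  unfold pdyx pdx
  rw [(hasFDerivAt_fderiv_apply hH _).fderiv]
  rfl

lemma fderiv_Xq_apply (q : ℝ) {H : V → ℝ} {z : V} (hH : DifferentiableAt ℝ (fderiv ℝ H) z)
    (Y : V) : fderiv ℝ (Xq q H) z Y = linearizedXq q (fderiv ℝ (fderiv ℝ H) z) Y := by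
  set B := fderiv ℝ (fderiv ℝ H) z
  have hX : HasFDerivAt (Xq q H)
      ((ContinuousLinearMap.pi fun i => q⁻¹ • B.flip (0, Pi.single i 1)).prod
        (ContinuousLinearMap.pi fun i => -B.flip (Pi.single i 1, 0))) z :=
    (hasFDerivAt_pi'' fun i => (hasFDerivAt_fderiv_apply hH _).const_mul q⁻¹).prodMk
      (hasFDerivAt_pi'' fun i => (hasFDerivAt_fderiv_apply hH _).neg)
  rw [hX.fderiv]
  rfl

end

theorem stmt14_general {n : ℕ} (q : ℝ) (hq1 : q ≠ 1)
    (H : (Fin n → ℝ) × (Fin n → ℝ) → ℝ) (hH : ContDiff ℝ 2 H) :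
    (∀ c : ℝ, c ≠ 0 →
      (∀ z Y₁ Y₂ : (Fin n → ℝ) × (Fin n → ℝ),
        sympl (fderiv ℝ (Xq q H) z Y₁) Y₂ + sympl Y₁ (fderiv ℝ (Xq q H) z Y₂) =
          c * sympl Y₁ Y₂) →
      ∀ p : (Fin n → ℝ) × (Fin n → ℝ), ∀ i j,
        pdyx H p i j = if i = j then c / (q⁻¹ - 1) else 0) ∧
    (∀ l : ℝ, l ≠ 0 →
      (∀ p : (Fin n → ℝ) × (Fin n → ℝ), ∀ i j,
        pdyx H p i j = if i = j then l else 0) →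
      ∀ z Y₁ Y₂ : (Fin n → ℝ) × (Fin n → ℝ),
        sympl (fderiv ℝ (Xq q H) z Y₁) Y₂ + sympl Y₁ (fderiv ℝ (Xq q H) z Y₂) =
          ((q⁻¹ - 1) * l) * sympl Y₁ Y₂) := by
  have hdiff (z) : DifferentiableAt ℝ (fderiv ℝ H) z :=
    (hH.fderiv_right (m := 1) le_rfl).differentiable one_ne_zero z
  have hsymm (z) : IsSymmSndFDerivAt ℝ H z := hH.contDiffAt.isSymmSndFDerivAt (by simp)
  constructor
  · intro c _ hconf p i j
    rw [pdyx_eq_fderiv_fderiv (hdiff p)]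
    refine mixed_eq_of_conformal hq1 (hsymm p) (fun Y₁ Y₂ => ?_) i j
    simpa only [fderiv_Xq_apply q (hdiff p)] using hconf p Y₁ Y₂
  · intro l _ hmixed z Y₁ Y₂
    rw [fderiv_Xq_apply q (hdiff z), fderiv_Xq_apply q (hdiff z)]
    refine conformal_of_mixed_eq (hsymm z) (fun i j => ?_) Y₁ Y₂
    rw [← pdyx_eq_fderiv_fderiv (hdiff z)]
    exact hmixed z i j

theorem stmt14 {n : ℕ} (q : ℝ) (hq0 : q ≠ 0) (hq1 : q ≠ 1)
    (H : (Fin n → ℝ) × (Fin n → ℝ) → ℝ) (hH : ContDiff ℝ 2 H) :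
    (∀ c : ℝ, c ≠ 0 →
      (∀ z Y₁ Y₂ : (Fin n → ℝ) × (Fin n → ℝ),
        sympl (fderiv ℝ (Xq q H) z Y₁) Y₂ + sympl Y₁ (fderiv ℝ (Xq q H) z Y₂) =
          c * sympl Y₁ Y₂) →
      ∀ p : (Fin n → ℝ) × (Fin n → ℝ), ∀ i j,
        pdyx H p i j = if i = j then c / (q⁻¹ - 1) else 0) ∧
    (∀ l : ℝ, l ≠ 0 →
      (∀ p : (Fin n → ℝ) × (Fin n → ℝ), ∀ i j,
        pdyx H p i j = if i = j then l else 0) →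
      ∀ z Y₁ Y₂ : (Fin n → ℝ) × (Fin n → ℝ),
        sympl (fderiv ℝ (Xq q H) z Y₁) Y₂ + sympl Y₁ (fderiv ℝ (Xq q H) z Y₂) =
          ((q⁻¹ - 1) * l) * sympl Y₁ Y₂) :=
  stmt14_general q hq1 H hH
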